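/- A compact metric space (X, d) is quasihypermetric if and only if I(μ) ≤ 0 for every finite signed Borel measure μ on X of total mass 0. -/

import Mathlib

open MeasureTheory Filter Topology

/-- `dmu μ x = ∫ d(x,y) dμ(y)`, defined via the Jordan decomposition of the
finite signed Borel measure `μ`. -/
noncomputable def dmu {X : Type*} [MetricSpace X] [MeasurableSpace X]
    (μ : SignedMeasure X) (x : X) : ℝ :=
  (∫ y, dist x y ∂μ.toJordanDecomposition.posPart) -
  (∫ y, dist x y ∂μ.toJordanDecomposition.negPart)

/-- `Ibil μ ν = ∫∫ d(x,y) dμ(x)dν(y)`. -/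
noncomputable def Ibil {X : Type*} [MetricSpace X] [MeasurableSpace X]
    (μ ν : SignedMeasure X) : ℝ :=
  (∫ x, dmu ν x ∂μ.toJordanDecomposition.posPart) -
  (∫ x, dmu ν x ∂μ.toJordanDecomposition.negPart)

/-- The energy integral `I(μ) = I(μ, μ)`. -/
noncomputable def Ien {X : Type*} [MetricSpace X] [MeasurableSpace X]
    (μ : SignedMeasure X) : ℝ := Ibil μ μ

/-- `(X, d)` is quasihypermetric: for all `n`, reals `α i` summing to `0` and
points `x i`, `∑ i j, α i * α j * d(x i, x j) ≤ 0`. -/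
def Quasihypermetric (X : Type*) [MetricSpace X] : Prop :=
  ∀ (n : ℕ) (α : Fin n → ℝ) (x : Fin n → X),
    (∑ i, α i) = 0 → ∑ i, ∑ j, α i * α j * dist (x i) (x j) ≤ 0

/-!
Write `μ = P - N` with `P`, `N` finite positive measures; for continuous integrands the
integrals against `μ` do not depend on the decomposition, so
`I(μ) = I(P, P) - I(P, N) - I(N, P) + I(N, N)` with `I(σ, ρ) = ∫∫ d(x, y) dρ(y) dσ(x)`.
For `μ = ∑ αᵢ δ_{xᵢ}` this is the quadratic form `∑ αᵢ αⱼ d(xᵢ, xⱼ)`, which gives one direction.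
Conversely, choose a simple function `π : X → X` with `d(π x, x) ≤ δ` (nearest point of a finite
`δ`-net). Replacing `d(x, y)` by `d(π x, π y)` changes `I(μ)` by at most `2δ (P(X) + N(X))²` and
turns it into the quadratic form of the mass-zero discrete measure `π_* μ`, which is `≤ 0`;
let `δ → 0`.
-/

open scoped NNReal

section Integral

variable {X : Type*} [TopologicalSpace X] [CompactSpace X] [MeasurableSpace X]
  [OpensMeasurableSpace X]

theorem Continuous.integrable_of_compactSpace {f : X → ℝ} (hf : Continuous f) (μ : Measure X)
    [IsFiniteMeasure μ] : Integrable f μ :=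
  hf.integrable_of_hasCompactSupport (.of_compactSpace f)

theorem integral_sub_integral_eq_of_toSignedMeasure_sub_eq {P N P' N' : Measure X}
    [IsFiniteMeasure P] [IsFiniteMeasure N] [IsFiniteMeasure P'] [IsFiniteMeasure N']
    (h : P.toSignedMeasure - N.toSignedMeasure = P'.toSignedMeasure - N'.toSignedMeasure)
    {f : X → ℝ} (hf : Continuous f) :
    ∫ x, f x ∂P - ∫ x, f x ∂N = ∫ x, f x ∂P' - ∫ x, f x ∂N' := by
  have hadd : P + N' = P' + N := by
    rw [← Measure.toSignedMeasure_eq_toSignedMeasure_iff, Measure.toSignedMeasure_add,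
      Measure.toSignedMeasure_add]
    exact sub_eq_sub_iff_add_eq_add.1 h
  have := congrArg (fun m => ∫ x, f x ∂m) hadd
  simp only [integral_add_measure (hf.integrable_of_compactSpace _)
    (hf.integrable_of_compactSpace _)] at this
  linarith

end Integral

noncomputable def distEnergy {X : Type*} [MetricSpace X] [MeasurableSpace X]
    (σ ρ : Measure X) : ℝ :=
  ∫ x, ∫ y, dist x y ∂ρ ∂σ

section Energy

variable {X : Type*} [MetricSpace X] [CompactSpace X] [MeasurableSpace X]
  [OpensMeasurableSpace X]

theorem continuous_integral_dist (ρ : Measure X) [IsFiniteMeasure ρ] :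
    Continuous fun x => ∫ y, dist x y ∂ρ := by
  simpa using continuous_parametric_integral_of_continuous (μ := ρ) continuous_dist isCompact_univ

theorem continuous_dmu (ν : SignedMeasure X) : Continuous (dmu ν) :=
  (continuous_integral_dist _).sub (continuous_integral_dist _)

variable {μ : SignedMeasure X} {P N : Measure X} [IsFiniteMeasure P] [IsFiniteMeasure N]

theorem dmu_eq_of_eq_sub (h : μ = P.toSignedMeasure - N.toSignedMeasure) (x : X) :
    dmu μ x = ∫ y, dist x y ∂P - ∫ y, dist x y ∂N :=
  integral_sub_integral_eq_of_toSignedMeasure_sub_eq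
    (μ.toSignedMeasure_toJordanDecomposition.trans h) (continuous_const.dist continuous_id)

theorem Ibil_eq_of_eq_sub (h : μ = P.toSignedMeasure - N.toSignedMeasure) (ν : SignedMeasure X) :
    Ibil μ ν = ∫ x, dmu ν x ∂P - ∫ x, dmu ν x ∂N :=
  integral_sub_integral_eq_of_toSignedMeasure_sub_eq
    (μ.toSignedMeasure_toJordanDecomposition.trans h) (continuous_dmu ν)

theorem Ien_eq_of_eq_sub (h : μ = P.toSignedMeasure - N.toSignedMeasure) :
    Ien μ = distEnergy P P - distEnergy P N - (distEnergy N P - distEnergy N N) := by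
  have hdmu : dmu μ = fun x => ∫ y, dist x y ∂P - ∫ y, dist x y ∂N :=
    funext (dmu_eq_of_eq_sub h)
  have hint : ∀ (σ ρ : Measure X) [IsFiniteMeasure σ] [IsFiniteMeasure ρ],
      Integrable (fun x => ∫ y, dist x y ∂ρ) σ :=
    fun σ ρ _ _ => (continuous_integral_dist ρ).integrable_of_compactSpace σ
  rw [Ien, Ibil_eq_of_eq_sub h, hdmu, integral_sub (hint P P) (hint P N),
    integral_sub (hint N P) (hint N N)]
  rfl

end Energy

theorem Finset.sum_sum_sub_mul_sub_mul {ι : Type*} (s : Finset ι) (a b : ι → ℝ)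
    (w : ι → ι → ℝ) :
    ∑ i ∈ s, ∑ j ∈ s, (a i - b i) * (a j - b j) * w i j =
      ∑ i ∈ s, ∑ j ∈ s, a i * a j * w i j - ∑ i ∈ s, ∑ j ∈ s, a i * b j * w i j -
        (∑ i ∈ s, ∑ j ∈ s, b i * a j * w i j - ∑ i ∈ s, ∑ j ∈ s, b i * b j * w i j) := by
  simp only [← Finset.sum_sub_distrib]
  exact Finset.sum_congr rfl fun i _ => Finset.sum_congr rfl fun j _ => by ring

theorem Quasihypermetric.sum_sum_nonpos {X : Type*} [MetricSpace X] (hX : Quasihypermetric X)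
    (s : Finset X) (α : X → ℝ) (hα : ∑ a ∈ s, α a = 0) :
    ∑ a ∈ s, ∑ b ∈ s, α a * α b * dist a b ≤ 0 := by
  have hsum : ∀ f : X → ℝ, ∑ k, f (s.equivFin.symm k) = ∑ a ∈ s, f a := fun f => by
    rw [s.equivFin.symm.sum_comp (fun a : s => f a), Finset.sum_coe_sort]
  have := hX s.card (fun k => α (s.equivFin.symm k)) (fun k => s.equivFin.symm k)
    ((hsum α).trans hα)
  simpa only [hsum fun a => ∑ b ∈ s, α a * α b * dist a b, ← hsum] using this

theorem integral_finset_sum_smul_dirac {X : Type*} [MeasurableSpace X]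
    [MeasurableSingletonClass X] {ι : Type*} (s : Finset ι) (w : ι → ℝ≥0) (x : ι → X)
    (f : X → ℝ) : ∫ y, f y ∂(∑ i ∈ s, w i • Measure.dirac (x i)) = ∑ i ∈ s, w i * f (x i) := by
  rw [integral_finsetSum_measure fun i _ => (integrable_dirac (by simp)).smul_measure_nnreal]
  simp [integral_smul_nnreal_measure, integral_dirac, NNReal.smul_def]

theorem distEnergy_finset_sum_smul_dirac {X : Type*} [MetricSpace X] [MeasurableSpace X]
    [MeasurableSingletonClass X] {ι κ : Type*} (s : Finset ι) (w : ι → ℝ≥0) (x : ι → X)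
    (t : Finset κ) (v : κ → ℝ≥0) (y : κ → X) :
    distEnergy (∑ i ∈ s, w i • Measure.dirac (x i)) (∑ j ∈ t, v j • Measure.dirac (y j)) =
      ∑ i ∈ s, ∑ j ∈ t, w i * v j * dist (x i) (y j) := by
  simp only [distEnergy, integral_finset_sum_smul_dirac, Finset.mul_sum, mul_assoc]

theorem quasihypermetric_of_Ien_nonpos {X : Type*} [MetricSpace X] [CompactSpace X]
    [MeasurableSpace X] [OpensMeasurableSpace X]
    (h : ∀ μ : SignedMeasure X, μ Set.univ = 0 → Ien μ ≤ 0) : Quasihypermetric X := by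
  intro n α x hα
  have hα' : ∀ i, ((α i).toNNReal : ℝ) - (-α i).toNNReal = α i := fun i => by
    simp only [Real.coe_toNNReal', max_zero_sub_max_neg_zero_eq_self]
  set P : Measure X := ∑ i, (α i).toNNReal • Measure.dirac (x i)
  set N : Measure X := ∑ i, (-α i).toNNReal • Measure.dirac (x i)
  have hmass : (P.toSignedMeasure - N.toSignedMeasure) Set.univ = 0 := by
    have hP := integral_finset_sum_smul_dirac Finset.univ (fun i => (α i).toNNReal) x fun _ => 1
    have hN := integral_finset_sum_smul_dirac Finset.univ (fun i => (-α i).toNNReal) x fun _ => 1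
    simp only [integral_const, smul_eq_mul, mul_one] at hP hN
    rw [sub_apply, Measure.toSignedMeasure_apply_measurable .univ,
      Measure.toSignedMeasure_apply_measurable .univ, hP, hN, ← Finset.sum_sub_distrib]
    simpa only [hα'] using hα
  have := h _ hmass
  rw [Ien_eq_of_eq_sub rfl, distEnergy_finset_sum_smul_dirac, distEnergy_finset_sum_smul_dirac,
    distEnergy_finset_sum_smul_dirac, distEnergy_finset_sum_smul_dirac,
    ← Finset.sum_sum_sub_mul_sub_mul] at this
  simpa only [hα'] using this

theorem integrable_comp_simpleFunc {X Y : Type*} [MeasurableSpace X] (σ : Measure X)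
    [IsFiniteMeasure σ] (π : SimpleFunc X Y) (g : Y → ℝ) : Integrable (fun x => g (π x)) σ :=
  (π.map g).integrable_of_isFiniteMeasure

theorem integral_comp_simpleFunc {X Y : Type*} [MeasurableSpace X] (σ : Measure X)
    [IsFiniteMeasure σ] (π : SimpleFunc X Y) (g : Y → ℝ) :
    ∫ x, g (π x) ∂σ = ∑ c ∈ π.range, σ.real (π ⁻¹' {c}) * g c := by
  have hunion : ⋃ c ∈ π.range, π ⁻¹' {c} = Set.univ :=
    Set.eq_univ_of_forall fun x => Set.mem_iUnion₂.2 ⟨π x, π.mem_range_self x, rfl⟩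
  rw [← setIntegral_univ, ← hunion, integral_biUnion_finset _
    (fun c _ => π.measurableSet_fiber c)
    (fun c _ c' _ hcc' => Set.disjoint_singleton.2 hcc' |>.preimage π)
    fun c _ => (integrable_comp_simpleFunc σ π g).integrableOn]
  refine Finset.sum_congr rfl fun c _ => ?_
  rw [setIntegral_congr_fun (π.measurableSet_fiber c) (g := fun _ => g c)
    fun x (hx : π x = c) => by rw [hx], setIntegral_const, smul_eq_mul]

theorem integral_integral_dist_comp_simpleFunc {X : Type*} [MetricSpace X] [MeasurableSpace X]
    (σ ρ : Measure X) [IsFiniteMeasure σ] [IsFiniteMeasure ρ] (π : SimpleFunc X X) :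
    ∫ x, ∫ y, dist (π x) (π y) ∂ρ ∂σ =
      ∑ a ∈ π.range, ∑ b ∈ π.range, σ.real (π ⁻¹' {a}) * ρ.real (π ⁻¹' {b}) * dist a b := by
  simp only [integral_comp_simpleFunc ρ π (dist (π _))]
  rw [integral_comp_simpleFunc σ π fun a => ∑ b ∈ π.range, ρ.real (π ⁻¹' {b}) * dist a b]
  simp only [Finset.mul_sum, mul_assoc]

section Approximation

variable {X : Type*} [MetricSpace X] [CompactSpace X] [MeasurableSpace X]
  [OpensMeasurableSpace X]

theorem exists_simpleFunc_dist_lt {δ : ℝ} (hδ : 0 < δ) :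
    ∃ π : SimpleFunc X X, ∀ x, dist (π x) x < δ := by
  rcases isEmpty_or_nonempty X with hX | hX
  · exact ⟨⟨id, isEmptyElim, Set.toFinite _⟩, isEmptyElim⟩
  obtain ⟨e, he⟩ := TopologicalSpace.exists_dense_seq X
  obtain ⟨t, ht⟩ := isCompact_univ.elim_finite_subcover (fun k => Metric.ball (e k) δ)
    (fun _ => Metric.isOpen_ball) fun x _ => by
      obtain ⟨k, hk⟩ := Metric.denseRange_iff.1 he x δ hδ
      exact Set.mem_iUnion.2 ⟨k, Metric.mem_ball.2 hk⟩
  refine ⟨SimpleFunc.nearestPt e (t.sup id), fun x => ?_⟩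
  obtain ⟨k, hkt, hxk⟩ := Set.mem_iUnion₂.1 (ht (Set.mem_univ x))
  have := SimpleFunc.edist_nearestPt_le e x (Finset.le_sup (f := id) hkt)
  rw [edist_dist, edist_dist, ENNReal.ofReal_le_ofReal_iff dist_nonneg] at this
  exact this.trans_lt (by rwa [dist_comm])

theorem abs_distEnergy_sub_integral_integral_dist_comp_le (σ ρ : Measure X) [IsFiniteMeasure σ]
    [IsFiniteMeasure ρ] {δ : ℝ} (π : SimpleFunc X X) (hπ : ∀ x, dist (π x) x ≤ δ) :
    |distEnergy σ ρ - ∫ x, ∫ y, dist (π x) (π y) ∂ρ ∂σ| ≤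
      2 * δ * (σ.real Set.univ * ρ.real Set.univ) := by
  have hinner : ∀ x, ‖∫ y, dist x y ∂ρ - ∫ y, dist (π x) (π y) ∂ρ‖ ≤ 2 * δ * ρ.real Set.univ := by
    intro x
    rw [← integral_sub ((continuous_const.dist continuous_id').integrable_of_compactSpace ρ)
      (integrable_comp_simpleFunc ρ π (dist (π x)))]
    refine norm_integral_le_of_norm_le_const (Eventually.of_forall fun y => ?_)
    rw [← dist_eq_norm]
    calc dist (dist x y) (dist (π x) (π y)) ≤ dist x (π x) + dist y (π y) :=
          dist_dist_dist_le x y (π x) (π y)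
      _ ≤ 2 * δ := by rw [dist_comm x, dist_comm y]; linarith [hπ x, hπ y]
  rw [distEnergy, ← integral_sub ((continuous_integral_dist ρ).integrable_of_compactSpace σ)
    (integrable_comp_simpleFunc σ π fun a => ∫ y, dist a (π y) ∂ρ), ← Real.norm_eq_abs]
  calc _ ≤ 2 * δ * ρ.real Set.univ * σ.real Set.univ :=
        norm_integral_le_of_norm_le_const (Eventually.of_forall hinner)
    _ = _ := by ring

end Approximation

theorem Quasihypermetric.Ien_nonpos {X : Type*} [MetricSpace X] [CompactSpace X]
    [MeasurableSpace X] [OpensMeasurableSpace X] (hX : Quasihypermetric X) (μ : SignedMeasure X)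
    (hμ : μ Set.univ = 0) : Ien μ ≤ 0 := by
  set P := μ.toJordanDecomposition.posPart
  set N := μ.toJordanDecomposition.negPart
  have hμPN : μ = P.toSignedMeasure - N.toSignedMeasure :=
    μ.toSignedMeasure_toJordanDecomposition.symm
  have hmass : P.real Set.univ - N.real Set.univ = 0 := by
    rwa [hμPN, sub_apply, Measure.toSignedMeasure_apply_measurable .univ,
      Measure.toSignedMeasure_apply_measurable .univ] at hμ
  have hsmall : ∀ δ > 0, Ien μ ≤ 2 * δ * (P.real Set.univ + N.real Set.univ) ^ 2 := by
    intro δ hδ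
    obtain ⟨π, hπ⟩ := exists_simpleFunc_dist_lt (X := X) hδ
    have hfiber : ∀ (σ : Measure X) [IsFiniteMeasure σ],
        ∑ c ∈ π.range, σ.real (π ⁻¹' {c}) = σ.real Set.univ := fun σ _ => by
      simpa using (integral_comp_simpleFunc σ π fun _ => (1 : ℝ)).symm
    have hQ := hX.sum_sum_nonpos π.range (fun c => P.real (π ⁻¹' {c}) - N.real (π ⁻¹' {c}))
      (by rw [Finset.sum_sub_distrib, hfiber P, hfiber N, hmass])
    simp only [Finset.sum_sum_sub_mul_sub_mul, ← integral_integral_dist_comp_simpleFunc] at hQ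
    have hπ' : ∀ x, dist (π x) x ≤ δ := fun x => (hπ x).le
    have hPP := abs_le.1 (abs_distEnergy_sub_integral_integral_dist_comp_le P P π hπ')
    have hPN := abs_le.1 (abs_distEnergy_sub_integral_integral_dist_comp_le P N π hπ')
    have hNP := abs_le.1 (abs_distEnergy_sub_integral_integral_dist_comp_le N P π hπ')
    have hNN := abs_le.1 (abs_distEnergy_sub_integral_integral_dist_comp_le N N π hπ')
    rw [Ien_eq_of_eq_sub hμPN]
    linarith [hPP.2, hPN.1, hNP.1, hNN.2]
  have hlim : Tendsto (fun δ : ℝ => 2 * δ * (P.real Set.univ + N.real Set.univ) ^ 2)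
      (𝓝[>] 0) (𝓝 0) := by
    refine (Continuous.tendsto' ?_ 0 0 (by simp)).mono_left nhdsWithin_le_nhds
    fun_prop
  exact ge_of_tendsto hlim (eventually_nhdsWithin_of_forall hsmall)

/-- A compact metric space is quasihypermetric iff `I(μ) ≤ 0` for every finite
signed Borel measure `μ` of total mass `0`. -/
theorem stmt_1 {X : Type*} [MetricSpace X] [CompactSpace X]
    [MeasurableSpace X] [BorelSpace X] :
    Quasihypermetric X ↔ ∀ μ : SignedMeasure X, μ Set.univ = 0 → Ien μ ≤ 0 :=
  ⟨Quasihypermetric.Ien_nonpos, quasihypermetric_of_Ien_nonpos⟩
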